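/- arXiv:2208.06591 — 3 statements merged into one kernel-verified Lean document; each statement's English description precedes it below -/
import Mathlib

section
/- Let g: ℂⁿ → ℂ be given by g(v) = Π_{j=1}^m (λ_j − 2i·Im⟨v, z_j⟩)^(−k_j) · Π_{j=1}^ℓ (λ'_j − 2i·Im⟨v, w_j⟩)^(−k'_j), where λ_j, λ'_j ∈ ℂ \ iℝ, k_j, k'_j ≥ 1, the vectors z_1,…,z_m span (over ℝ) a Lagrangian subspace V of ℂⁿ, and w_1,…,w_ℓ span the complementary Lagrangian subspace V' = iV with ℂⁿ = V ⊕ V'. Then g is continuous and vanishes at infinity: g ∈ C₀(ℂⁿ). -/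
open Filter

lemma factor_ne_zero {lam : ℂ} (hlam : lam.re ≠ 0) (t : ℝ) :
    lam - 2 * Complex.I * (t : ℂ) ≠ 0 := by
  intro h
  apply hlam
  have := congrArg Complex.re h
  simpa [Complex.sub_re, Complex.mul_re, Complex.mul_im] using this

lemma factor_re_le_norm (lam : ℂ) (t : ℝ) :
    |lam.re| ≤ ‖lam - 2 * Complex.I * (t : ℂ)‖ := by
  have h : (lam - 2 * Complex.I * (t : ℂ)).re = lam.re := by
    simp [Complex.sub_re, Complex.mul_re, Complex.mul_im]
  calc |lam.re| = |(lam - 2 * Complex.I * (t : ℂ)).re| := by rw [h]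
    _ ≤ ‖lam - 2 * Complex.I * (t : ℂ)‖ := Complex.abs_re_le_norm _

lemma factor_im_le_norm (lam : ℂ) (t : ℝ) :
    2 * |t| - |lam.im| ≤ ‖lam - 2 * Complex.I * (t : ℂ)‖ := by
  have h : (lam - 2 * Complex.I * (t : ℂ)).im = lam.im - 2 * t := by
    simp [Complex.sub_im, Complex.mul_re, Complex.mul_im]
  have h2 : |2 * t| - |lam.im| ≤ |2 * t - lam.im| := abs_sub_abs_le_abs_sub _ _
  have h3 : |2 * t - lam.im| = |lam.im - 2 * t| := abs_sub_comm _ _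
  have h4 : |(lam - 2 * Complex.I * (t : ℂ)).im| ≤ ‖lam - 2 * Complex.I * (t : ℂ)‖ :=
    Complex.abs_im_le_norm _
  rw [h] at h4
  have h5 : |2 * t| = 2 * |t| := by rw [abs_mul]; norm_num
  linarith

lemma factor_norm_eq (lam : ℂ) (k : ℕ) (t : ℝ) :
    ‖(lam - 2 * Complex.I * (t : ℂ)) ^ (-(k : ℤ))‖
      = (‖lam - 2 * Complex.I * (t : ℂ)‖ ^ k)⁻¹ := by
  rw [norm_zpow, zpow_neg, zpow_natCast]

lemma factor_norm_le {lam : ℂ} (hlam : lam.re ≠ 0) (k : ℕ) (t : ℝ) :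
    ‖(lam - 2 * Complex.I * (t : ℂ)) ^ (-(k : ℤ))‖ ≤ (|lam.re| ^ k)⁻¹ := by
  rw [factor_norm_eq]
  have h0 : (0:ℝ) < |lam.re| ^ k := pow_pos (abs_pos.2 hlam) k
  exact inv_anti₀ h0 (pow_le_pow_left₀ (abs_nonneg _) (factor_re_le_norm lam t) k)

lemma factor_norm_le' {lam : ℂ} (hlam : lam.re ≠ 0) {k : ℕ} (hk : 1 ≤ k) {t s : ℝ}
    (hs : 0 < s) (hst : s ≤ 2 * |t| - |lam.im|) :
    ‖(lam - 2 * Complex.I * (t : ℂ)) ^ (-(k : ℤ))‖ ≤ s⁻¹ * (|lam.re| ^ (k - 1))⁻¹ := by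
  rw [factor_norm_eq]
  set x := lam - 2 * Complex.I * (t : ℂ) with hx
  have hre : |lam.re| ≤ ‖x‖ := factor_re_le_norm lam t
  have hrepos : (0:ℝ) < |lam.re| := abs_pos.2 hlam
  have hxs : s ≤ ‖x‖ := le_trans hst (factor_im_le_norm lam t)
  have hxpos : (0:ℝ) < ‖x‖ := lt_of_lt_of_le hs hxs
  have hk1 : ‖x‖ ^ k = ‖x‖ * ‖x‖ ^ (k - 1) := by
    conv_lhs => rw [← Nat.sub_add_cancel hk]
    rw [pow_succ']
  rw [hk1, mul_inv]
  apply mul_le_mul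
  · exact inv_anti₀ hs hxs
  · exact inv_anti₀ (pow_pos hrepos _) (pow_le_pow_left₀ (abs_nonneg _) hre _)
  · positivity
  · positivity

set_option maxHeartbeats 1000000 in
/-- Products of classical resolvent functions associated to two complementary Lagrangian
subspaces `V` and `V' = iV` of `ℂⁿ` (with the vectors `z_j` spanning `V` and `w_j`
spanning `V'`) are continuous and vanish at infinity, i.e. belong to `C₀(ℂⁿ)`. -/
theorem resolvent_product_zero_at_infty {n : ℕ}
    (V V' : Submodule ℝ (EuclideanSpace ℂ (Fin n)))
    (hLag : ∀ a ∈ V, ∀ b ∈ V, (inner (𝕜 := ℂ) a b).im = 0)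
    (hdim : Module.finrank ℝ V = n)
    (hV' : ∀ x : EuclideanSpace ℂ (Fin n), x ∈ V' ↔ ∃ y ∈ V, x = Complex.I • y)
    (hsup : V ⊔ V' = ⊤) (hinf : V ⊓ V' = ⊥)
    (m l : ℕ) (z : Fin m → EuclideanSpace ℂ (Fin n)) (w : Fin l → EuclideanSpace ℂ (Fin n))
    (hzV : Submodule.span ℝ (Set.range z) = V)
    (hwV' : Submodule.span ℝ (Set.range w) = V')
    (lam : Fin m → ℂ) (lam' : Fin l → ℂ)
    (hlam : ∀ j, (lam j).re ≠ 0) (hlam' : ∀ j, (lam' j).re ≠ 0)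
    (k : Fin m → ℕ) (k' : Fin l → ℕ) (hk : ∀ j, 1 ≤ k j) (hk' : ∀ j, 1 ≤ k' j)
    (g : EuclideanSpace ℂ (Fin n) → ℂ)
    (hg : ∀ v, g v =
      (∏ j, (lam j - 2 * Complex.I * (((inner (𝕜 := ℂ) (z j) v : ℂ).im : ℝ) : ℂ))
          ^ (-(k j : ℤ))) *
      ∏ j, (lam' j - 2 * Complex.I * (((inner (𝕜 := ℂ) (w j) v : ℂ).im : ℝ) : ℂ))
          ^ (-(k' j : ℤ))) :
    Continuous g ∧ Tendsto g (cocompact (EuclideanSpace ℂ (Fin n))) (nhds 0) := by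
  classical
  let u : Fin m ⊕ Fin l → EuclideanSpace ℂ (Fin n) := Sum.elim z w
  let μ : Fin m ⊕ Fin l → ℂ := Sum.elim lam lam'
  let κ : Fin m ⊕ Fin l → ℕ := Sum.elim k k'
  have hμ : ∀ i, (μ i).re ≠ 0 := by rintro (j | j); exacts [hlam j, hlam' j]
  have hκ : ∀ i, 1 ≤ κ i := by rintro (j | j); exacts [hk j, hk' j]
  let t : Fin m ⊕ Fin l → EuclideanSpace ℂ (Fin n) → ℝ := fun i v => (inner (𝕜 := ℂ) (u i) v).im
  have hgprod : ∀ v, g v = ∏ i, (μ i - 2 * Complex.I * ((t i v : ℝ) : ℂ)) ^ (-(κ i : ℤ)) := by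
    intro v
    rw [hg v, Fintype.prod_sum_type]
    rfl
  have htcont : ∀ i, Continuous (t i) := fun i =>
    Complex.continuous_im.comp (Continuous.inner continuous_const continuous_id)
  have hcont : Continuous g := by
    have h : Continuous fun v => ∏ i, (μ i - 2 * Complex.I * ((t i v : ℝ) : ℂ)) ^ (-(κ i : ℤ)) := by
      apply continuous_finset_prod
      intro i _
      apply Continuous.zpow₀
      · exact continuous_const.sub
          (continuous_const.mul (Complex.continuous_ofReal.comp (htcont i)))
      · intro v; left; exact factor_ne_zero (hμ i) (t i v)
    exact h.congr fun v => (hgprod v).symm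
  have hsmul : ∀ (r : ℝ) (a : EuclideanSpace ℂ (Fin n)), r • a = ((r : ℂ)) • a := by
    intro r a
    rw [← smul_one_smul ℂ r a]
    norm_num [Complex.real_smul]
  let T : EuclideanSpace ℂ (Fin n) →ₗ[ℝ] (Fin m ⊕ Fin l → ℝ) :=
    { toFun := fun v i => t i v
      map_add' := by
        intro a b
        funext i
        show (inner (𝕜 := ℂ) (u i) (a + b)).im = (inner (𝕜 := ℂ) (u i) a).im + (inner (𝕜 := ℂ) (u i) b).im
        rw [inner_add_right, Complex.add_im]
      map_smul' := by
        intro r a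
        funext i
        show (inner (𝕜 := ℂ) (u i) (r • a)).im = r * (inner (𝕜 := ℂ) (u i) a).im
        rw [hsmul r a, inner_smul_right]
        simp [Complex.mul_im] }
  have hTapp : ∀ v i, T v i = t i v := fun v i => rfl
  have hker : LinearMap.ker T = ⊥ := by
    rw [LinearMap.ker_eq_bot']
    intro v hv
    have hall : ∀ a : EuclideanSpace ℂ (Fin n), (inner (𝕜 := ℂ) a v).im = 0 := by
      let φ : EuclideanSpace ℂ (Fin n) →ₗ[ℝ] ℝ :=
        { toFun := fun a => (inner (𝕜 := ℂ) a v).im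
          map_add' := by
            intro a b
            show (inner (𝕜 := ℂ) (a + b) v).im = (inner (𝕜 := ℂ) a v).im + (inner (𝕜 := ℂ) b v).im
            rw [inner_add_left, Complex.add_im]
          map_smul' := by
            intro r a
            show (inner (𝕜 := ℂ) (r • a) v).im = r * (inner (𝕜 := ℂ) a v).im
            rw [hsmul r a, inner_smul_left, Complex.conj_ofReal]
            simp [Complex.mul_im] }
      have hVle : V ≤ LinearMap.ker φ := by
        rw [← hzV, Submodule.span_le]
        rintro _ ⟨j, rfl⟩
        have h1 : t (Sum.inl j) v = 0 := by
          rw [← hTapp]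
          rw [hv]
          rfl
        exact LinearMap.mem_ker.mpr h1
      have hV'le : V' ≤ LinearMap.ker φ := by
        rw [← hwV', Submodule.span_le]
        rintro _ ⟨j, rfl⟩
        have h1 : t (Sum.inr j) v = 0 := by
          rw [← hTapp]
          rw [hv]
          rfl
        exact LinearMap.mem_ker.mpr h1
      have htop : (⊤ : Submodule ℝ (EuclideanSpace ℂ (Fin n))) ≤ LinearMap.ker φ := by
        rw [← hsup]; exact sup_le hVle hV'le
      intro a
      exact LinearMap.mem_ker.mp (htop (Submodule.mem_top (x := a)))
    have h1 := hall (Complex.I • v)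
    rw [inner_smul_left] at h1
    have h2 : (inner (𝕜 := ℂ) v v) = ((‖v‖ : ℂ) ^ 2) := inner_self_eq_norm_sq_to_K v
    rw [h2] at h1
    have h3 : ((starRingEnd ℂ) Complex.I * (‖v‖ : ℂ) ^ 2).im = -(‖v‖ ^ 2) := by
      simp [Complex.conj_I, Complex.mul_im, ← Complex.ofReal_pow]
    rw [h3] at h1
    have h4 : ‖v‖ = 0 := by
      have := sq_eq_zero_iff.mp (by linarith : ‖v‖ ^ 2 = 0)
      exact this
    exact norm_eq_zero.mp h4
  obtain ⟨K, hK0, hKT⟩ := T.exists_antilipschitzWith hker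
  have hKpos : (0:ℝ) < (K : ℝ) := hK0
  set c : ℝ := ((K : ℝ))⁻¹ with hc
  have hcpos : 0 < c := by rw [hc]; positivity
  have hTle : ∀ v, c * ‖v‖ ≤ ‖T v‖ := by
    intro v
    have h1 := hKT.le_mul_dist v 0
    rw [map_zero] at h1
    simp only [dist_zero_right] at h1
    rw [hc, inv_mul_le_iff₀ hKpos]
    exact h1
  set A : ℝ := ∑ i, |(μ i).im| with hA
  set P : ℝ := ∏ i, max ((|(μ i).re| ^ κ i)⁻¹) 1 with hP
  set Q : ℝ := ∑ i, (|(μ i).re| ^ (κ i - 1))⁻¹ with hQ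
  have hA0 : 0 ≤ A := by
    rw [hA]; exact Finset.sum_nonneg fun i _ => abs_nonneg _
  have hP0 : 0 ≤ P := by
    rw [hP]; exact Finset.prod_nonneg fun i _ => le_trans zero_le_one (le_max_right _ _)
  have hQ0 : 0 ≤ Q := by
    rw [hQ]; exact Finset.sum_nonneg fun i _ => by positivity
  have key : ∀ v, 0 < 2 * ‖T v‖ - A → ‖g v‖ ≤ P * Q * (2 * ‖T v‖ - A)⁻¹ := by
    intro v hv
    have hM : 0 < ‖T v‖ := by linarith
    have hne : Nonempty (Fin m ⊕ Fin l) := by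
      by_contra h
      rw [not_nonempty_iff] at h
      have h0 : T v = 0 := funext fun i => h.elim i
      rw [h0, norm_zero] at hM
      exact lt_irrefl _ hM
    obtain ⟨i₀, hi₀⟩ := Finite.exists_max fun i => |t i v|
    have hMle : ‖T v‖ ≤ |t i₀ v| := by
      rw [pi_norm_le_iff_of_nonneg (abs_nonneg _)]
      intro i
      rw [hTapp, Real.norm_eq_abs]
      exact hi₀ i
    have himA : |(μ i₀).im| ≤ A := by
      rw [hA]
      exact Finset.single_le_sum (f := fun i => |(μ i).im|) (fun i _ => abs_nonneg _) (Finset.mem_univ i₀)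
    have hsA : 2 * ‖T v‖ - A ≤ 2 * |t i₀ v| - |(μ i₀).im| := by linarith
    have hsmall : ‖(μ i₀ - 2 * Complex.I * ((t i₀ v : ℝ) : ℂ)) ^ (-(κ i₀ : ℤ))‖
        ≤ (2 * ‖T v‖ - A)⁻¹ * Q := by
      have h1 := factor_norm_le' (hμ i₀) (hκ i₀) hv hsA
      have h2 : (|(μ i₀).re| ^ (κ i₀ - 1))⁻¹ ≤ Q := by
        rw [hQ]
        exact Finset.single_le_sum (f := fun i => (|(μ i).re| ^ (κ i - 1))⁻¹) (fun i _ => by positivity) (Finset.mem_univ i₀)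
      exact le_trans h1 (mul_le_mul_of_nonneg_left h2 (by positivity))
    have hrest : ∏ i ∈ Finset.univ.erase i₀,
        ‖(μ i - 2 * Complex.I * ((t i v : ℝ) : ℂ)) ^ (-(κ i : ℤ))‖ ≤ P := by
      rw [hP]
      calc ∏ i ∈ Finset.univ.erase i₀,
            ‖(μ i - 2 * Complex.I * ((t i v : ℝ) : ℂ)) ^ (-(κ i : ℤ))‖
          ≤ ∏ i ∈ Finset.univ.erase i₀, max ((|(μ i).re| ^ κ i)⁻¹) 1 := by
            apply Finset.prod_le_prod (fun i _ => norm_nonneg _)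
            intro i _
            exact le_trans (factor_norm_le (hμ i) (κ i) (t i v)) (le_max_left _ _)
        _ ≤ ∏ i, max ((|(μ i).re| ^ κ i)⁻¹) 1 := by
            rw [← Finset.mul_prod_erase Finset.univ _ (Finset.mem_univ i₀)]
            exact le_mul_of_one_le_left
              (Finset.prod_nonneg fun i _ => le_trans zero_le_one (le_max_right _ _))
              (le_max_right _ _)
    rw [hgprod v, norm_prod,
      ← Finset.mul_prod_erase Finset.univ _ (Finset.mem_univ i₀)]
    calc ‖(μ i₀ - 2 * Complex.I * ((t i₀ v : ℝ) : ℂ)) ^ (-(κ i₀ : ℤ))‖ *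
          ∏ i ∈ Finset.univ.erase i₀,
            ‖(μ i - 2 * Complex.I * ((t i v : ℝ) : ℂ)) ^ (-(κ i : ℤ))‖
        ≤ ((2 * ‖T v‖ - A)⁻¹ * Q) * P := by
          apply mul_le_mul hsmall hrest
            (Finset.prod_nonneg fun i _ => norm_nonneg _) (by positivity)
      _ = P * Q * (2 * ‖T v‖ - A)⁻¹ := by ring
  have hBlim : Tendsto (fun r : ℝ => P * Q * (2 * c * r - A)⁻¹) atTop (nhds 0) := by
    have h1 : Tendsto (fun r : ℝ => 2 * c * r - A) atTop atTop := by
      apply tendsto_atTop_add_const_right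
      exact Tendsto.const_mul_atTop (by positivity) tendsto_id
    have h2 : Tendsto (fun r : ℝ => (2 * c * r - A)⁻¹) atTop (nhds 0) :=
      tendsto_inv_atTop_zero.comp h1
    have h3 := h2.const_mul (P * Q)
    simpa using h3
  have hcomp : Tendsto (fun v : EuclideanSpace ℂ (Fin n) => P * Q * (2 * c * ‖v‖ - A)⁻¹)
      (cocompact (EuclideanSpace ℂ (Fin n))) (nhds 0) :=
    hBlim.comp tendsto_norm_cocompact_atTop
  have hnorm : Tendsto (fun v => ‖g v‖) (cocompact (EuclideanSpace ℂ (Fin n))) (nhds 0) := by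
    apply squeeze_zero' (Eventually.of_forall fun v => norm_nonneg _) ?_ hcomp
    have hev : ∀ᶠ v : EuclideanSpace ℂ (Fin n) in cocompact _, (A + 1) / (2 * c) ≤ ‖v‖ :=
      tendsto_norm_cocompact_atTop.eventually_ge_atTop _
    filter_upwards [hev] with v hvR
    have h2c : (0:ℝ) < 2 * c := by positivity
    have h1 : A + 1 ≤ ‖v‖ * (2 * c) := (div_le_iff₀ h2c).1 hvR
    have h2 : 0 < 2 * c * ‖v‖ - A := by nlinarith
    have h3 : 2 * c * ‖v‖ - A ≤ 2 * ‖T v‖ - A := by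
      have h4 := hTle v
      nlinarith
    calc ‖g v‖ ≤ P * Q * (2 * ‖T v‖ - A)⁻¹ := key v (lt_of_lt_of_le h2 h3)
      _ ≤ P * Q * (2 * c * ‖v‖ - A)⁻¹ :=
          mul_le_mul_of_nonneg_left (inv_anti₀ h2 h3) (by positivity)
  exact ⟨hcont, tendsto_zero_iff_norm_tendsto_zero.2 hnorm⟩
end

section
/- Let R_cl be the unital C*-subalgebra of bounded continuous functions on ℝ^d generated by the functions x ↦ (λ − i·⟨x, a⟩)^(−1) for λ ∈ ℝ \ {0} and a ∈ ℝ^d, a ≠ 0. Then C₀(ℝ^d) ⊆ R_cl. -/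
/-!
Pass to the one-point compactification and apply Stone–Weierstrass there. With `bᵢ` an
orthonormal basis, the product `G x = ∏ᵢ (1 - i⟪x, bᵢ⟫)⁻¹` of generators never vanishes, and
`|G x|⁻² = ∏ᵢ (1 + ⟪x, bᵢ⟫²) ≥ 1 + ‖x‖²` by Parseval, so `G` vanishes at infinity and separates
`∞` from every point. Two points `x ≠ y` with `G x = G y` are separated by
`G · (1 - i⟪·, x - y⟫)⁻¹`, which still vanishes at infinity.
-/

open Complex BoundedContinuousFunction Filter Topology

section OnePointStoneWeierstrass

variable {X : Type*} [TopologicalSpace X] {𝕜 : Type*} [RCLike 𝕜]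

noncomputable def OnePoint.restrictStarAlgHom : C(OnePoint X, 𝕜) →⋆ₐ[𝕜] X →ᵇ 𝕜 where
  toFun b := (mkOfCompact b).compContinuous ⟨OnePoint.some, OnePoint.continuous_coe⟩
  map_one' := rfl
  map_mul' _ _ := rfl
  map_zero' := rfl
  map_add' _ _ := rfl
  commutes' _ := rfl
  map_star' _ := rfl

lemma OnePoint.continuous_restrictStarAlgHom :
    Continuous (OnePoint.restrictStarAlgHom : C(OnePoint X, 𝕜) → X →ᵇ 𝕜) :=
  AddMonoidHomClass.continuous_of_bound _ 1 fun b => by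
    rw [one_mul, ← norm_mkOfCompact b]
    exact norm_compContinuous_le _ _

theorem StarSubalgebra.mem_topologicalClosure_of_tendsto_cocompact [R1Space X]
    (A : StarSubalgebra 𝕜 (X →ᵇ 𝕜))
    (hsep : ∀ x y, x ≠ y → ∃ g ∈ A, Tendsto g (cocompact X) (𝓝 0) ∧ g x ≠ g y)
    (hne : ∀ x, ∃ g ∈ A, Tendsto g (cocompact X) (𝓝 0) ∧ g x ≠ 0)
    {f : X →ᵇ 𝕜} (hf : Tendsto f (cocompact X) (𝓝 0)) : f ∈ A.topologicalClosure := by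
  set B := A.topologicalClosure.comap OnePoint.restrictStarAlgHom
  have extend_mem : ∀ g ∈ A.topologicalClosure, ∀ hg : Tendsto g (cocompact X) (𝓝 0),
      OnePoint.continuousMapMk g.toContinuousMap 0 (by rwa [coclosedCompact_eq_cocompact]) ∈ B :=
    fun _ hg _ => hg
  have hB : B.SeparatesPoints := by
    intro p q hpq
    induction p using OnePoint.rec with
    | infty =>
      induction q using OnePoint.rec with
      | infty => exact absurd rfl hpq
      | coe y =>
        obtain ⟨g, hgA, hg0, hgy⟩ := hne y
        exact ⟨_, ⟨_, extend_mem g (A.le_topologicalClosure hgA) hg0, rfl⟩, hgy.symm⟩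
    | coe x =>
      induction q using OnePoint.rec with
      | infty =>
        obtain ⟨g, hgA, hg0, hgx⟩ := hne x
        exact ⟨_, ⟨_, extend_mem g (A.le_topologicalClosure hgA) hg0, rfl⟩, hgx⟩
      | coe y =>
        obtain ⟨g, hgA, hg0, hgxy⟩ := hsep x y fun h => hpq (congrArg _ h)
        exact ⟨_, ⟨_, extend_mem g (A.le_topologicalClosure hgA) hg0, rfl⟩, hgxy⟩
  have hBclosed : IsClosed (B : Set C(OnePoint X, 𝕜)) :=
    A.isClosed_topologicalClosure.preimage OnePoint.continuous_restrictStarAlgHom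
  have hBtop : ⊤ ≤ B :=
    ContinuousMap.starSubalgebra_topologicalClosure_eq_top_of_separatesPoints B hB ▸
      StarSubalgebra.topologicalClosure_minimal le_rfl hBclosed
  exact hBtop (StarSubalgebra.mem_top (x := OnePoint.continuousMapMk f.toContinuousMap 0
    (by rwa [coclosedCompact_eq_cocompact])))

end OnePointStoneWeierstrass

theorem Finset.one_add_sum_le_prod_one_add {ι R : Type*} [CommSemiring R] [PartialOrder R]
    [IsOrderedRing R] (s : Finset ι) {f : ι → R} (hf : ∀ i ∈ s, 0 ≤ f i) :
    1 + ∑ i ∈ s, f i ≤ ∏ i ∈ s, (1 + f i) := by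
  classical
  induction s using Finset.induction_on with
  | empty => simp
  | insert j s hj ih =>
    rw [Finset.sum_insert hj, Finset.prod_insert hj]
    have hs : ∀ i ∈ s, 0 ≤ f i := fun i hi => hf i (Finset.mem_insert_of_mem hi)
    have hfj : 0 ≤ f j := hf j (Finset.mem_insert_self j s)
    calc 1 + (f j + ∑ i ∈ s, f i) ≤ (1 + f j) * (1 + ∑ i ∈ s, f i) :=
          (le_add_of_nonneg_right (mul_nonneg hfj (Finset.sum_nonneg hs))).trans_eq (by ring)
      _ ≤ (1 + f j) * ∏ i ∈ s, (1 + f i) :=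
          mul_le_mul_of_nonneg_left (ih hs) (add_nonneg zero_le_one hfj)

namespace Complex

lemma one_le_norm_one_sub_I_mul (t : ℝ) : 1 ≤ ‖1 - I * t‖ := by
  simpa using abs_re_le_norm (1 - I * t)

lemma one_sub_I_mul_ne_zero (t : ℝ) : 1 - I * t ≠ 0 :=
  norm_pos_iff.mp (zero_lt_one.trans_le (one_le_norm_one_sub_I_mul t))

lemma norm_one_sub_I_mul_sq (t : ℝ) : ‖1 - I * t‖ ^ 2 = 1 + t ^ 2 := by
  rw [Complex.sq_norm, normSq_apply]
  simp [sq]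

end Complex

section Resolvent

variable {E : Type*} [NormedAddCommGroup E] [InnerProductSpace ℝ E]

noncomputable def classicalResolvent (a : E) : E →ᵇ ℂ :=
  ofNormedAddCommGroup (fun x => (1 - I * (inner ℝ x a : ℝ))⁻¹)
    (by fun_prop (disch := exact fun x => one_sub_I_mul_ne_zero _)) 1
    fun x => by simpa using inv_le_one_of_one_le₀ (one_le_norm_one_sub_I_mul (inner ℝ x a))

@[simp] lemma classicalResolvent_apply (a x : E) :
    classicalResolvent a x = (1 - I * (inner ℝ x a : ℝ))⁻¹ := rfl

lemma norm_classicalResolvent_apply_le (a x : E) : ‖classicalResolvent a x‖ ≤ 1 := by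
  simpa using inv_le_one_of_one_le₀ (one_le_norm_one_sub_I_mul (inner ℝ x a))

lemma classicalResolvent_sub_apply_ne {x y : E} (hxy : x ≠ y) :
    classicalResolvent (x - y) x ≠ classicalResolvent (x - y) y := by
  have hinner : inner ℝ x (x - y) ≠ inner ℝ y (x - y) := by
    rw [← sub_ne_zero, ← inner_sub_left]
    exact inner_self_ne_zero.mpr (sub_ne_zero.mpr hxy)
  simpa [I_ne_zero] using hinner

lemma norm_le_norm_prod_one_sub_I_mul_inner {ι : Type*} [Fintype ι]
    (b : OrthonormalBasis ι ℝ E) (x : E) :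
    ‖x‖ ≤ ‖∏ i, (1 - I * (inner ℝ x (b i) : ℝ))‖ := by
  refine (pow_le_pow_iff_left₀ (norm_nonneg _) (norm_nonneg _) two_ne_zero).mp ?_
  calc ‖x‖ ^ 2 = ∑ i, inner ℝ x (b i) ^ 2 := (b.sum_sq_inner_left x).symm
    _ ≤ 1 + ∑ i, inner ℝ x (b i) ^ 2 := le_add_of_nonneg_left zero_le_one
    _ ≤ ∏ i, (1 + inner ℝ x (b i) ^ 2) :=
        Finset.one_add_sum_le_prod_one_add _ fun i _ => sq_nonneg _
    _ = ‖∏ i, (1 - I * (inner ℝ x (b i) : ℝ))‖ ^ 2 := by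
        simp only [norm_prod, ← Finset.prod_pow, norm_one_sub_I_mul_sq]

variable [FiniteDimensional ℝ E]

variable (E) in
noncomputable def classicalResolventProd : E →ᵇ ℂ :=
  ∏ i, classicalResolvent (stdOrthonormalBasis ℝ E i)

lemma classicalResolventProd_apply (x : E) :
    classicalResolventProd E x =
      (∏ i, (1 - I * (inner ℝ x (stdOrthonormalBasis ℝ E i) : ℝ)))⁻¹ := by
  simp [classicalResolventProd, prod_apply, Finset.prod_inv_distrib]

lemma classicalResolventProd_apply_ne_zero (x : E) : classicalResolventProd E x ≠ 0 := by
  rw [classicalResolventProd_apply]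
  exact inv_ne_zero (Finset.prod_ne_zero_iff.mpr fun i _ => one_sub_I_mul_ne_zero _)

lemma tendsto_classicalResolventProd_cocompact :
    Tendsto (classicalResolventProd E) (cocompact E) (𝓝 0) := by
  have hden : Tendsto (fun x : E => ∏ i, (1 - I * (inner ℝ x (stdOrthonormalBasis ℝ E i) : ℝ)))
      (cocompact E) (Bornology.cobounded ℂ) :=
    tendsto_norm_atTop_iff_cobounded.mp <| tendsto_atTop_mono
      (norm_le_norm_prod_one_sub_I_mul_inner _) tendsto_norm_cocompact_atTop
  exact (tendsto_inv₀_cobounded.comp hden).congr fun x => (classicalResolventProd_apply x).symm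

end Resolvent

theorem StarSubalgebra.mem_topologicalClosure_of_classicalResolvent_mem {E : Type*}
    [NormedAddCommGroup E] [InnerProductSpace ℝ E] [FiniteDimensional ℝ E]
    (A : StarSubalgebra ℂ (E →ᵇ ℂ)) (hA : ∀ a, a ≠ 0 → classicalResolvent a ∈ A)
    {f : E →ᵇ ℂ} (hf : Tendsto f (cocompact E) (𝓝 0)) : f ∈ A.topologicalClosure := by
  have hG : classicalResolventProd E ∈ A :=
    prod_mem fun i _ => hA _ ((stdOrthonormalBasis ℝ E).orthonormal.ne_zero i)
  have hG0 : Tendsto (classicalResolventProd E) (cocompact E) (𝓝 0) :=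
    tendsto_classicalResolventProd_cocompact
  refine A.mem_topologicalClosure_of_tendsto_cocompact (fun x y hxy => ?_)
    (fun x => ⟨_, hG, hG0, classicalResolventProd_apply_ne_zero x⟩) hf
  by_cases hGxy : classicalResolventProd E x = classicalResolventProd E y
  · refine ⟨_, mul_mem hG (hA _ (sub_ne_zero.mpr hxy)), hG0.zero_mul_isBoundedUnder_le ?_, ?_⟩
    · exact isBoundedUnder_of ⟨1, norm_classicalResolvent_apply_le _⟩
    · rw [coe_mul, Pi.mul_apply, Pi.mul_apply, hGxy]
      exact (mul_right_injective₀ (classicalResolventProd_apply_ne_zero y)).ne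
        (classicalResolvent_sub_apply_ne hxy)
  · exact ⟨_, hG, hG0, hGxy⟩

/-- `C₀(ℝ^d)` is contained in the unital C*-subalgebra of bounded continuous functions
on `ℝ^d` generated by the resolvent functions `x ↦ (λ − i⟨x,a⟩)⁻¹`, `λ ∈ ℝ \ {0}`,
`a ∈ ℝ^d \ {0}`. -/
theorem zeroAtInfty_subset_classical_resolvent_algebra (d : ℕ)
    (S : Set (BoundedContinuousFunction (EuclideanSpace ℝ (Fin d)) ℂ))
    (hS : S = {g | ∃ (lam : ℝ) (a : EuclideanSpace ℝ (Fin d)), lam ≠ 0 ∧ a ≠ 0 ∧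
      ∀ x, g x = ((lam : ℂ) - Complex.I * ((inner ℝ x a : ℝ) : ℂ))⁻¹})
    (f : ZeroAtInftyContinuousMap (EuclideanSpace ℝ (Fin d)) ℂ) :
    f.toBCF ∈ (StarAlgebra.adjoin ℂ S).topologicalClosure := by
  have hA : ∀ a, a ≠ 0 → classicalResolvent a ∈ StarAlgebra.adjoin ℂ S := fun a ha =>
    StarAlgebra.subset_adjoin ℂ S (hS ▸ ⟨1, a, one_ne_zero, ha, fun x => by simp⟩)
  exact (StarAlgebra.adjoin ℂ S).mem_topologicalClosure_of_classicalResolvent_mem hA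
    f.zero_at_infty'
end

section
/- Let (t_n) be a summable sequence of positive reals, H = ℓ²(ℕ), and μ the Gaussian product measure on H with covariance B (Be_n = t_n·e_n). For z ∈ H with Σ |z_n|²/t_n² < ∞ define f_z(w) = Σ_n w_n·conj(z_n)/t_n. Then ∫_H |f_z(w)|² dμ(w) = 2·Σ_n |z_n|²/t_n. -/
/-!
For finitely supported `y`, the characteristic function identifies the law of
`w ↦ Re ⟨w, y⟩` as the centered real Gaussian of variance `Σ t_n |y_n|²`.
Since `Re ⟨w, i y⟩ = Im ⟨w, y⟩`, this gives `∫ |⟨w, y⟩|² dμ = 2 Σ t_n |y_n|²`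
for finite sums. In particular `∫ Σ |w_n|² dμ = 2 Σ t_n < ∞`, so `μ`-a.e. `w` is
square summable, and by Cauchy–Schwarz the squared partial sums of `⟨w, y⟩` are
dominated by the integrable `(Σ |w_n|²)(Σ |y_n|²)`. Dominated convergence passes
to the limit; take `y_n = z_n / t_n`.
-/

open MeasureTheory ProbabilityTheory Filter Complex
open scoped NNReal ENNReal ComplexConjugate

section GaussianReal

variable {Ω : Type*} [MeasurableSpace Ω] {μ : Measure Ω} {S : Ω → ℝ}

theorem map_eq_gaussianReal_of_integral_cexp [IsProbabilityMeasure μ] (hS : Measurable S)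
    (v : ℝ≥0) (h : ∀ s : ℝ, ∫ x, cexp (s * S x * I) ∂μ = cexp (-(v * s ^ 2 / 2))) :
    μ.map S = gaussianReal 0 v := by
  have := Measure.isProbabilityMeasure_map (μ := μ) hS.aemeasurable
  refine Measure.ext_of_charFun (funext fun s => ?_)
  rw [charFun_apply_real, integral_map hS.aemeasurable (by fun_prop), h, charFun_gaussianReal]
  simp

theorem integrable_sq_of_map_eq_gaussianReal (hS : AEMeasurable S μ) {v : ℝ≥0}
    (h : μ.map S = gaussianReal 0 v) : Integrable (fun x => S x ^ 2) μ := by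
  have : Integrable (fun x : ℝ => x ^ 2) (μ.map S) := by
    rw [h]
    exact (memLp_id_gaussianReal 2).integrable_sq
  exact this.comp_aemeasurable hS

theorem integral_sq_of_map_eq_gaussianReal (hS : AEMeasurable S μ) {v : ℝ≥0}
    (h : μ.map S = gaussianReal 0 v) : ∫ x, S x ^ 2 ∂μ = v := by
  rw [← integral_map (f := fun x : ℝ => x ^ 2) hS (by fun_prop), h,
    ← variance_id_gaussianReal (μ := 0) (v := v),
    variance_of_integral_eq_zero aemeasurable_id (by simp [integral_id_gaussianReal])]
  rfl

end GaussianReal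

section SeriesOfNonneg

variable {Ω : Type*} [MeasurableSpace Ω] {μ : Measure Ω} {g : ℕ → Ω → ℝ}

theorem lintegral_tsum_ofReal_ne_top (hg : ∀ n, Integrable (g n) μ) (hg0 : ∀ n x, 0 ≤ g n x)
    (hsum : Summable fun n => ∫ x, g n x ∂μ) :
    ∫⁻ x, ∑' n, ENNReal.ofReal (g n x) ∂μ ≠ ∞ := by
  rw [lintegral_tsum fun n => (hg n).aemeasurable.ennreal_ofReal]
  simp_rw [← ofReal_integral_eq_lintegral_ofReal (hg _) (ae_of_all _ (hg0 _))]
  rw [← ENNReal.ofReal_tsum_of_nonneg (fun n => integral_nonneg (hg0 n)) hsum]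
  exact ENNReal.ofReal_ne_top

theorem ae_summable_of_summable_integral (hg : ∀ n, Integrable (g n) μ)
    (hg0 : ∀ n x, 0 ≤ g n x) (hsum : Summable fun n => ∫ x, g n x ∂μ) :
    ∀ᵐ x ∂μ, Summable fun n => g n x := by
  filter_upwards [ae_lt_top' (AEMeasurable.tsum fun n => (hg n).aemeasurable.ennreal_ofReal)
    (lintegral_tsum_ofReal_ne_top hg hg0 hsum)] with x hx
  simpa [ENNReal.toReal_ofReal (hg0 _ x)] using ENNReal.summable_toReal hx.ne

theorem integrable_tsum_of_summable_integral (hg : ∀ n, Integrable (g n) μ)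
    (hg0 : ∀ n x, 0 ≤ g n x) (hsum : Summable fun n => ∫ x, g n x ∂μ) :
    Integrable (fun x => ∑' n, g n x) μ := by
  have := integrable_toReal_of_lintegral_ne_top
    (AEMeasurable.tsum fun n => (hg n).aemeasurable.ennreal_ofReal)
    (lintegral_tsum_ofReal_ne_top hg hg0 hsum)
  simpa [ENNReal.tsum_toReal_eq, ENNReal.toReal_ofReal (hg0 _ _)] using this

end SeriesOfNonneg

section SquareSummable

variable {ι R : Type*} [NormedRing R] {a b : ι → R}

theorem summable_norm_mul_of_summable_norm_sq (ha : Summable fun n => ‖a n‖ ^ 2)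
    (hb : Summable fun n => ‖b n‖ ^ 2) : Summable fun n => ‖a n * b n‖ :=
  .of_nonneg_of_le (fun _ => norm_nonneg _)
    (fun n => (norm_mul_le _ _).trans (by nlinarith [two_mul_le_add_sq ‖a n‖ ‖b n‖]))
    ((ha.add hb).div_const 2)

theorem norm_sum_mul_sq_le_tsum (s : Finset ι) (ha : Summable fun n => ‖a n‖ ^ 2)
    (hb : Summable fun n => ‖b n‖ ^ 2) :
    ‖∑ n ∈ s, a n * b n‖ ^ 2 ≤ (∑' n, ‖a n‖ ^ 2) * ∑' n, ‖b n‖ ^ 2 :=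
  calc ‖∑ n ∈ s, a n * b n‖ ^ 2 ≤ (∑ n ∈ s, ‖a n‖ * ‖b n‖) ^ 2 := by
        gcongr
        exact (norm_sum_le _ _).trans (Finset.sum_le_sum fun n _ => norm_mul_le _ _)
    _ ≤ (∑ n ∈ s, ‖a n‖ ^ 2) * ∑ n ∈ s, ‖b n‖ ^ 2 :=
        Finset.sum_mul_sq_le_sq_mul_sq _ _ _
    _ ≤ (∑' n, ‖a n‖ ^ 2) * ∑' n, ‖b n‖ ^ 2 := by
        gcongr
        · exact ha.sum_le_tsum _ fun _ _ => by positivity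
        · exact hb.sum_le_tsum _ fun _ _ => by positivity

end SquareSummable

theorem norm_sq_sum_mul_conj_eq (y : ℕ → ℂ) (F : Finset ℕ) (w : ℕ → ℂ) :
    ‖∑ n ∈ F, w n * conj (y n)‖ ^ 2
      = (∑ n ∈ F, w n * conj (y n)).re ^ 2 + (∑ n ∈ F, w n * conj (I * y n)).re ^ 2 := by
  have : ∑ n ∈ F, w n * conj (I * y n) = -I * ∑ n ∈ F, w n * conj (y n) := by
    simp [Finset.mul_sum, mul_left_comm]
  rw [this, Complex.sq_norm, normSq_apply, neg_mul, neg_re, I_mul_re]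
  ring

def IsDiagGaussian (t : ℕ → ℝ) (μ : Measure (ℕ → ℂ)) : Prop :=
  ∀ y : ℕ → ℂ, (Function.support y).Finite →
    ∫ x, cexp (I * ((∑' n, (x n * conj (y n)).re : ℝ) : ℂ)) ∂μ
      = cexp (-(((∑' n, t n * ‖y n‖ ^ 2 : ℝ) : ℂ)) / 2)

namespace IsDiagGaussian

variable {t : ℕ → ℝ} {μ : Measure (ℕ → ℂ)} [IsProbabilityMeasure μ]

theorem map_re_sum (hμ : IsDiagGaussian t μ) (ht : ∀ n, 0 ≤ t n) (y : ℕ → ℂ)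
    (F : Finset ℕ) :
    μ.map (fun w => (∑ n ∈ F, w n * conj (y n)).re)
      = gaussianReal 0 (∑ n ∈ F, t n * ‖y n‖ ^ 2).toNNReal := by
  refine map_eq_gaussianReal_of_integral_cexp (by fun_prop) _ fun s => ?_
  set ys : ℕ → ℂ := fun n => if n ∈ F then s * y n else 0
  have hys : ∀ n ∉ F, ys n = 0 := fun n hn => if_neg hn
  have hsupp : (Function.support ys).Finite :=
    F.finite_toSet.subset fun n hn => by_contra fun h => hn (hys n h)
  have hre : ∀ x : ℕ → ℂ,
      ∑' n, (x n * conj (ys n)).re = s * (∑ n ∈ F, x n * conj (y n)).re := by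
    intro x
    rw [tsum_eq_sum (s := F) fun n hn => by simp [hys n hn], re_sum, Finset.mul_sum]
    refine Finset.sum_congr rfl fun n hn => ?_
    simp [ys, hn, mul_left_comm (x n)]
  have hvar : ∑' n, t n * ‖ys n‖ ^ 2 = s ^ 2 * ∑ n ∈ F, t n * ‖y n‖ ^ 2 := by
    rw [tsum_eq_sum (s := F) fun n hn => by simp [hys n hn], Finset.mul_sum]
    refine Finset.sum_congr rfl fun n hn => ?_
    simp [ys, hn, mul_pow, mul_left_comm]
  have hchar := hμ ys hsupp
  simp only [hre, hvar] at hchar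
  rw [Real.coe_toNNReal _ (Finset.sum_nonneg fun n _ => mul_nonneg (ht n) (sq_nonneg _))]
  convert hchar using 2
  · funext x
    congr 1
    push_cast
    ring
  · push_cast
    ring

theorem integrable_re_sum_sq (hμ : IsDiagGaussian t μ) (ht : ∀ n, 0 ≤ t n) (y : ℕ → ℂ)
    (F : Finset ℕ) : Integrable (fun w => (∑ n ∈ F, w n * conj (y n)).re ^ 2) μ :=
  integrable_sq_of_map_eq_gaussianReal (Measurable.aemeasurable (by fun_prop))
    (hμ.map_re_sum ht y F)

theorem integral_re_sum_sq (hμ : IsDiagGaussian t μ) (ht : ∀ n, 0 ≤ t n) (y : ℕ → ℂ)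
    (F : Finset ℕ) :
    ∫ w, (∑ n ∈ F, w n * conj (y n)).re ^ 2 ∂μ = ∑ n ∈ F, t n * ‖y n‖ ^ 2 := by
  rw [integral_sq_of_map_eq_gaussianReal (Measurable.aemeasurable (by fun_prop))
    (hμ.map_re_sum ht y F)]
  exact Real.coe_toNNReal _ (Finset.sum_nonneg fun n _ => mul_nonneg (ht n) (sq_nonneg _))

theorem integrable_norm_sq_sum (hμ : IsDiagGaussian t μ) (ht : ∀ n, 0 ≤ t n) (y : ℕ → ℂ)
    (F : Finset ℕ) : Integrable (fun w => ‖∑ n ∈ F, w n * conj (y n)‖ ^ 2) μ := by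
  simp_rw [norm_sq_sum_mul_conj_eq]
  exact (hμ.integrable_re_sum_sq ht y F).add (hμ.integrable_re_sum_sq ht _ F)

theorem integral_norm_sq_sum (hμ : IsDiagGaussian t μ) (ht : ∀ n, 0 ≤ t n) (y : ℕ → ℂ)
    (F : Finset ℕ) :
    ∫ w, ‖∑ n ∈ F, w n * conj (y n)‖ ^ 2 ∂μ
      = 2 * ∑ n ∈ F, t n * ‖y n‖ ^ 2 := by
  simp_rw [norm_sq_sum_mul_conj_eq]
  rw [integral_add (hμ.integrable_re_sum_sq ht y F) (hμ.integrable_re_sum_sq ht _ F),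
    hμ.integral_re_sum_sq ht, hμ.integral_re_sum_sq ht]
  simp only [Complex.norm_mul, norm_I, one_mul]
  ring

theorem integrable_norm_sq_apply (hμ : IsDiagGaussian t μ) (ht : ∀ n, 0 ≤ t n) (n : ℕ) :
    Integrable (fun w => ‖w n‖ ^ 2) μ := by
  simpa using hμ.integrable_norm_sq_sum ht 1 {n}

theorem integral_norm_sq_apply (hμ : IsDiagGaussian t μ) (ht : ∀ n, 0 ≤ t n) (n : ℕ) :
    ∫ w, ‖w n‖ ^ 2 ∂μ = 2 * t n := by
  simpa using hμ.integral_norm_sq_sum ht 1 {n}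

theorem summable_integral_norm_sq_apply (hμ : IsDiagGaussian t μ) (ht : ∀ n, 0 ≤ t n)
    (hts : Summable t) : Summable fun n => ∫ w, ‖w n‖ ^ 2 ∂μ := by
  simpa only [hμ.integral_norm_sq_apply ht] using hts.mul_left 2

theorem ae_summable_norm_sq (hμ : IsDiagGaussian t μ) (ht : ∀ n, 0 ≤ t n) (hts : Summable t) :
    ∀ᵐ w ∂μ, Summable fun n => ‖w n‖ ^ 2 :=
  ae_summable_of_summable_integral (hμ.integrable_norm_sq_apply ht) (fun _ _ => by positivity)
    (hμ.summable_integral_norm_sq_apply ht hts)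

theorem integrable_tsum_norm_sq (hμ : IsDiagGaussian t μ) (ht : ∀ n, 0 ≤ t n)
    (hts : Summable t) : Integrable (fun w => ∑' n, ‖w n‖ ^ 2) μ :=
  integrable_tsum_of_summable_integral (hμ.integrable_norm_sq_apply ht)
    (fun _ _ => by positivity) (hμ.summable_integral_norm_sq_apply ht hts)

theorem integral_norm_sq_tsum (hμ : IsDiagGaussian t μ) (ht : ∀ n, 0 ≤ t n) (hts : Summable t)
    {y : ℕ → ℂ} (hy : Summable fun n => ‖y n‖ ^ 2) :
    ∫ w, ‖∑' n, w n * conj (y n)‖ ^ 2 ∂μ = 2 * ∑' n, t n * ‖y n‖ ^ 2 := by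
  have hy' : Summable fun n => ‖conj (y n)‖ ^ 2 := by simpa using hy
  have hty : Summable fun n => t n * ‖y n‖ ^ 2 :=
    .of_nonneg_of_le (fun n => mul_nonneg (ht n) (sq_nonneg _))
      (fun n => mul_le_mul_of_nonneg_right (hts.le_tsum n fun m _ => ht m) (by positivity))
      (hy.mul_left _)
  have hlim : Tendsto (fun N => ∫ w, ‖∑ n ∈ Finset.range N, w n * conj (y n)‖ ^ 2 ∂μ)
      atTop (nhds (∫ w, ‖∑' n, w n * conj (y n)‖ ^ 2 ∂μ)) := by
    refine tendsto_integral_of_dominated_convergence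
      (fun w => (∑' n, ‖w n‖ ^ 2) * ∑' n, ‖conj (y n)‖ ^ 2)
      (fun N => (hμ.integrable_norm_sq_sum ht y _).aestronglyMeasurable)
      ((hμ.integrable_tsum_norm_sq ht hts).mul_const _) (fun N => ?_) ?_
    · filter_upwards [hμ.ae_summable_norm_sq ht hts] with w hw
      rw [Real.norm_of_nonneg (by positivity)]
      exact norm_sum_mul_sq_le_tsum _ hw hy'
    · filter_upwards [hμ.ae_summable_norm_sq ht hts] with w hw
      have hsum := (summable_norm_mul_of_summable_norm_sq hw hy').of_norm
      exact (hsum.hasSum.tendsto_sum_nat.norm).pow 2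
  simp only [hμ.integral_norm_sq_sum ht] at hlim
  exact tendsto_nhds_unique hlim (hty.hasSum.tendsto_sum_nat.const_mul 2)

end IsDiagGaussian

/-- Let `(t_n)` be a summable sequence of positive reals and `μ` the Gaussian product
measure with covariance `B`, `B e_n = t_n e_n` (characterized by its characteristic
function `∫ e^(i Re⟨x,y⟩) dμ(x) = e^(−½⟨By,y⟩)`). For `z` with `Σ |z_n|²/t_n² < ∞` and
`f_z(w) = Σ_n w_n conj(z_n)/t_n`, one has `∫ |f_z|² dμ = 2 Σ_n |z_n|²/t_n`. -/
theorem gaussian_product_l2_norm (t : ℕ → ℝ) (ht : ∀ n, 0 < t n) (hts : Summable t)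
    (μ : Measure (ℕ → ℂ)) [IsProbabilityMeasure μ]
    (hμ : ∀ y : ℕ → ℂ, (Function.support y).Finite →
      ∫ x, Complex.exp (Complex.I * ((∑' n, (x n * (starRingEnd ℂ) (y n)).re : ℝ) : ℂ)) ∂μ
        = Complex.exp (-(((∑' n, t n * ‖y n‖ ^ 2 : ℝ) : ℂ)) / 2))
    (z : ℕ → ℂ) (hz : Summable fun n => ‖z n‖ ^ 2 / (t n) ^ 2) :
    ∫ w, ‖∑' n, w n * (starRingEnd ℂ) (z n) / (t n)‖ ^ 2 ∂μ
      = 2 * ∑' n, ‖z n‖ ^ 2 / t n := by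
  have hzt : Summable fun n => ‖z n / t n‖ ^ 2 := by
    simpa [norm_div, abs_of_pos (ht _), div_pow] using hz
  have key := IsDiagGaussian.integral_norm_sq_tsum hμ (fun n => (ht n).le) hts hzt
  convert key using 4 with w n
  · simp [mul_div_assoc]
  · have := (ht n).ne'
    rw [norm_div, norm_real, Real.norm_of_nonneg (ht n).le]
    field_simp
end
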